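/- Let D > 0 be an integer with D ≡ 0 or 1 (mod 4) and let z = x + iy be a point of the complex upper half-plane. Then the set S = { (a,b,c) ∈ ℤ³ : b²−4ac = D, a < 0, and a(x²+y²)+bx+c > 0 } is finite; moreover, S is empty whenever y > √D. -/
import Mathlib


/-!
STATEMENT 12: Let D > 0 be an integer with D ≡ 0 or 1 (mod 4) and let z = x + iy be a point
of the complex upper half-plane.  Then the set
S = { (a,b,c) ∈ ℤ³ : b²−4ac = D, a < 0, and a(x²+y²)+bx+c > 0 } is finite; moreover, S is
empty whenever y > √D.
-/

set_option maxHeartbeats 2000000 in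
theorem statement12 (D : ℤ) (hD : 0 < D) (hDmod : D % 4 = 0 ∨ D % 4 = 1)
    (x y : ℝ) (hy : 0 < y) :
    ({p : ℤ × ℤ × ℤ | p.2.1 ^ 2 - 4 * p.1 * p.2.2 = D ∧ p.1 < 0 ∧
        0 < (p.1 : ℝ) * (x ^ 2 + y ^ 2) + (p.2.1 : ℝ) * x + (p.2.2 : ℝ)}).Finite ∧
    (Real.sqrt D < y →
      {p : ℤ × ℤ × ℤ | p.2.1 ^ 2 - 4 * p.1 * p.2.2 = D ∧ p.1 < 0 ∧
        0 < (p.1 : ℝ) * (x ^ 2 + y ^ 2) + (p.2.1 : ℝ) * x + (p.2.2 : ℝ)} = ∅) := by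
  set S : Set (ℤ × ℤ × ℤ) := {p : ℤ × ℤ × ℤ | p.2.1 ^ 2 - 4 * p.1 * p.2.2 = D ∧ p.1 < 0 ∧
        0 < (p.1 : ℝ) * (x ^ 2 + y ^ 2) + (p.2.1 : ℝ) * x + (p.2.2 : ℝ)} with hS
  -- the key inequality : (2ax+b)^2 + 4 a^2 y^2 < D
  have key : ∀ p ∈ S, (2 * (p.1 : ℝ) * x + (p.2.1 : ℝ)) ^ 2 +
      4 * (p.1 : ℝ) ^ 2 * y ^ 2 < (D : ℝ) := by
    rintro ⟨a, b, c⟩ ⟨h1, h2, h3⟩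
    have hd : (b : ℝ) ^ 2 - 4 * (a : ℝ) * (c : ℝ) = (D : ℝ) := by exact_mod_cast h1
    have ha : (a : ℝ) < 0 := by exact_mod_cast h2
    nlinarith [mul_pos (neg_pos.mpr ha) h3]
  constructor
  · -- finiteness
    set N : ℤ := ⌈(D : ℝ) / (4 * y ^ 2)⌉ with hN
    have hN0 : 0 < N := by
      have : (0 : ℝ) < (D : ℝ) / (4 * y ^ 2) := by positivity
      exact Int.ceil_pos.mpr this
    set M : ℤ := ⌈(D : ℝ) + 2 * (N : ℝ) * |x|⌉ with hM
    have hM0 : 0 < M := by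
      have h1 : (0 : ℝ) < (D : ℝ) + 2 * (N : ℝ) * |x| := by
        have : (0 : ℝ) ≤ 2 * (N : ℝ) * |x| := by positivity
        have : (0 : ℝ) < (D : ℝ) := by exact_mod_cast hD
        linarith
      exact Int.ceil_pos.mpr h1
    set C : ℤ := M ^ 2 + D with hC
    apply Set.Finite.subset
      ((Set.finite_Icc (-N) N).prod ((Set.finite_Icc (-M) M).prod (Set.finite_Icc (-C) C)))
    rintro ⟨a, b, c⟩ hp
    obtain ⟨h1, h2, h3⟩ := hp
    have hk := key ⟨a, b, c⟩ ⟨h1, h2, h3⟩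
    simp only at hk
    -- bound on a
    have ha2 : 4 * (a : ℝ) ^ 2 * y ^ 2 < (D : ℝ) := by nlinarith [sq_nonneg (2 * (a:ℝ) * x + b)]
    have haN : (a : ℝ) ^ 2 < (N : ℝ) := by
      have h4 : ((a : ℝ)) ^ 2 < (D : ℝ) / (4 * y ^ 2) := by
        rw [lt_div_iff₀ (by positivity)]; nlinarith
      exact lt_of_lt_of_le h4 (Int.le_ceil _)
    have haN' : a ^ 2 ≤ N := by
      have : ((a ^ 2 : ℤ) : ℝ) < (N : ℝ) := by push_cast; exact haN
      exact le_of_lt (by exact_mod_cast this)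
    have haI : a ∈ Set.Icc (-N) N := by
      constructor <;> nlinarith [sq_nonneg (a + 1), sq_nonneg (a - 1)]
    -- bound on b
    have haNr : |(a : ℝ)| ≤ (N : ℝ) := by
      have h1 : (a : ℝ) ≤ (N : ℝ) := by exact_mod_cast haI.2
      have h2 : -(N : ℝ) ≤ (a : ℝ) := by exact_mod_cast haI.1
      rw [abs_le]; exact ⟨h2, h1⟩
    have htD : |2 * (a : ℝ) * x + (b : ℝ)| < (D : ℝ) := by
      have hD1 : (1 : ℝ) ≤ (D : ℝ) := by exact_mod_cast hD
      have ht2 : (2 * (a : ℝ) * x + (b : ℝ)) ^ 2 < (D : ℝ) ^ 2 := by nlinarith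
      rw [abs_lt]
      constructor <;> nlinarith [sq_nonneg (2 * (a : ℝ) * x + (b : ℝ) - D),
        sq_nonneg (2 * (a : ℝ) * x + (b : ℝ) + D)]
    have hbb : |(b : ℝ)| < (D : ℝ) + 2 * (N : ℝ) * |x| := by
      have h1 : |(b : ℝ)| ≤ |2 * (a : ℝ) * x + (b : ℝ)| + |2 * (a : ℝ) * x| := by
        have := abs_sub_abs_le_abs_sub (b : ℝ) (-(2 * (a : ℝ) * x))
        simp only [abs_neg, sub_neg_eq_add] at this
        calc |(b:ℝ)| ≤ |(b:ℝ) + 2*(a:ℝ)*x| + |2*(a:ℝ)*x| := by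
              have := abs_add_le ((b:ℝ) + 2*(a:ℝ)*x) (-(2*(a:ℝ)*x))
              simpa using this
          _ = |2*(a:ℝ)*x + (b:ℝ)| + |2*(a:ℝ)*x| := by rw [add_comm ((b:ℝ)) _]
      have h2 : |2 * (a : ℝ) * x| ≤ 2 * (N : ℝ) * |x| := by
        rw [abs_mul, abs_mul, abs_two]
        have : (0:ℝ) ≤ |x| := abs_nonneg x
        nlinarith
      linarith
    have hbM : b ∈ Set.Icc (-M) M := by
      have hble : |(b : ℝ)| < (M : ℝ) := lt_of_lt_of_le hbb (Int.le_ceil _)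
      rw [abs_lt] at hble
      constructor
      · have : (-(M:ℤ) : ℝ) ≤ (b : ℝ) := by push_cast; linarith
        exact_mod_cast this
      · have : (b : ℝ) ≤ ((M:ℤ) : ℝ) := by push_cast; linarith
        exact_mod_cast this
    -- bound on c
    have hb2 : b ^ 2 ≤ M ^ 2 := by
      obtain ⟨hb1, hb2⟩ := hbM
      nlinarith
    have hcC : c ∈ Set.Icc (-C) C := by
      have hac : 4 * a * c = b ^ 2 - D := by linarith [h1]
      have ha1 : a ≤ -1 := by omega
      have hC0 : 0 ≤ C := by positivity
      constructor
      · -- -C ≤ c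
        rcases le_or_gt 0 c with h | h
        · linarith
        · -- c < 0 : a*c ≥ -c, and 4ac = b^2 - D ≤ M^2
          have hp : -c ≤ a * c := by nlinarith
          nlinarith [sq_nonneg M, hD.le, hb2]
      · -- c ≤ C
        rcases le_or_gt c 0 with h | h
        · linarith
        · -- c > 0 : a*c ≤ -c, and 4ac = b^2 - D ≥ -D
          have hp : a * c ≤ -c := by nlinarith
          nlinarith [sq_nonneg b, sq_nonneg M, hD.le]
    exact ⟨haI, hbM, hcC⟩
  · -- emptiness
    intro hsq
    rw [Set.eq_empty_iff_forall_notMem]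
    rintro ⟨a, b, c⟩ hp
    obtain ⟨h1, h2, h3⟩ := hp
    have hk := key ⟨a, b, c⟩ ⟨h1, h2, h3⟩
    simp only at hk
    have hy2 : (D : ℝ) < y ^ 2 := by
      have := (Real.sqrt_lt' hy).mp hsq
      linarith
    have ha1 : (a : ℝ) ≤ -1 := by exact_mod_cast (by omega : a ≤ -1)
    nlinarith [sq_nonneg (2 * (a:ℝ) * x + b), sq_nonneg ((a:ℝ) + 1)]
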